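/- arXiv:2004.12497 — 3 statements merged into one kernel-verified Lean document; each statement's English description precedes it below -/
import Mathlib

section
/- Let E be the ellipse x²/a² + y²/b² = 1 with a > b > 0 and foci f₁, f₂ at (±√(a²−b²), 0). At any point P on E, the curvature κ of E satisfies κ = a·b·(d₁·d₂)^(−3/2), where d₁, d₂ are the distances from P to the two foci. -/
/-- At P = (a cos t, b sin t) on the ellipse x²/a² + y²/b² = 1 (a > b > 0),
the curvature κ = ab/(a² sin²t + b² cos²t)^(3/2) satisfies
κ = a·b·(d₁·d₂)^(−3/2), where d₁, d₂ are the Euclidean distances from P to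
the foci (±√(a²−b²), 0). -/
theorem stmt2 (a b t : ℝ) (hab : a > b) (hb : b > 0)
    (c : ℝ) (hc : c = Real.sqrt (a ^ 2 - b ^ 2))
    (d1 d2 : ℝ)
    (hd1 : d1 = Real.sqrt ((a * Real.cos t - c) ^ 2 + (b * Real.sin t) ^ 2))
    (hd2 : d2 = Real.sqrt ((a * Real.cos t + c) ^ 2 + (b * Real.sin t) ^ 2)) :
    a * b / (a ^ 2 * Real.sin t ^ 2 + b ^ 2 * Real.cos t ^ 2) ^ ((3 : ℝ) / 2)
      = a * b * (d1 * d2) ^ (-(3 : ℝ) / 2) := by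
  have ha : 0 < a := lt_trans hb hab
  have hc0 : 0 ≤ c := hc ▸ Real.sqrt_nonneg _
  have hcsq : c ^ 2 = a ^ 2 - b ^ 2 := by
    rw [hc, Real.sq_sqrt]; nlinarith
  have hca : c < a := by nlinarith
  have hcos := Real.neg_one_le_cos t
  have hcos' := Real.cos_le_one t
  have hpy := Real.sin_sq_add_cos_sq t
  have h1 : d1 = a - c * Real.cos t := by
    rw [hd1]
    have : (a * Real.cos t - c) ^ 2 + (b * Real.sin t) ^ 2
        = (a - c * Real.cos t) ^ 2 := by nlinarith
    rw [this, Real.sqrt_sq (by nlinarith)]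
  have h2 : d2 = a + c * Real.cos t := by
    rw [hd2]
    have : (a * Real.cos t + c) ^ 2 + (b * Real.sin t) ^ 2
        = (a + c * Real.cos t) ^ 2 := by nlinarith
    rw [this, Real.sqrt_sq (by nlinarith)]
  have hprod : d1 * d2 = a ^ 2 * Real.sin t ^ 2 + b ^ 2 * Real.cos t ^ 2 := by
    rw [h1, h2]; nlinarith
  have hD : 0 < a ^ 2 * Real.sin t ^ 2 + b ^ 2 * Real.cos t ^ 2 := by nlinarith
  rw [hprod, show -(3 : ℝ) / 2 = -((3 : ℝ) / 2) by ring,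
    Real.rpow_neg hD.le, div_eq_mul_inv]
end

section
/- Let N = 2m and let P₁, …, P_N be points in ℝ² with P_{i+m} = −Pᵢ for all i (indices mod N), and let f₂ = −f₁ for a point f₁ ∈ ℝ². For each i let Q_{1,i} (resp. Q_{2,i}) be the orthogonal projection of f₁ (resp. f₂) onto the line through Pᵢ and Pᵢ₊₁ (assumed distinct). Then Q_{2,i+m} = −Q_{1,i} for all i; consequently the pedal polygons of the polygon (Pᵢ) with respect to f₁ and f₂ have equal signed areas. -/
/-- Cross product of two planar vectors. -/
def cross (p q : ℝ × ℝ) : ℝ := p.1 * q.2 - q.1 * p.2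

/-- Signed area of the polygon with vertex list W₀,…,W_{N−1} (cyclic). -/
noncomputable def signedArea (N : ℕ) (W : ℕ → ℝ × ℝ) : ℝ :=
  (1 / 2) * ∑ i ∈ Finset.range N, cross (W i) (W ((i + 1) % N))

/-- Dot product of two planar vectors. -/
def dot (p q : ℝ × ℝ) : ℝ := p.1 * q.1 + p.2 * q.2

lemma sum_shift_one {n : ℕ} (f : ℕ → ℝ) (hf : ∀ i, f (i + n) = f i) :
    ∑ i ∈ Finset.range n, f (i + 1) = ∑ i ∈ Finset.range n, f i := by
  have h1 : ∑ i ∈ Finset.range (n + 1), f i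
      = (∑ i ∈ Finset.range n, f (i + 1)) + f 0 := Finset.sum_range_succ' f n
  have h2 : ∑ i ∈ Finset.range (n + 1), f i
      = (∑ i ∈ Finset.range n, f i) + f n := Finset.sum_range_succ f n
  have h3 : f n = f 0 := by simpa using hf 0
  linarith [h1, h2]

lemma sum_shift {n : ℕ} (f : ℕ → ℝ) (hf : ∀ i, f (i + n) = f i) (k : ℕ) :
    ∑ i ∈ Finset.range n, f (i + k) = ∑ i ∈ Finset.range n, f i := by
  induction k with
  | zero => simp
  | succ k ih =>
    have this := sum_shift_one (fun i => f (i + k)) (fun i => by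
      show f (i + n + k) = f (i + k)
      rw [show i + n + k = i + k + n by ring]; exact hf (i + k))
    calc ∑ i ∈ Finset.range n, f (i + (k + 1))
        = ∑ i ∈ Finset.range n, f (i + 1 + k) := by
          apply Finset.sum_congr rfl; intro i _; ring_nf
      _ = ∑ i ∈ Finset.range n, f (i + k) := this
      _ = ∑ i ∈ Finset.range n, f i := ih

/-- Uniqueness of the foot of perpendicular. -/
lemma foot_unique {x a b q q' : ℝ × ℝ} (hab : a ≠ b)
    (hq : ∃ t : ℝ, q = a + t • (b - a)) (hq' : ∃ t : ℝ, q' = a + t • (b - a))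
    (hp : dot (x - q) (b - a) = 0) (hp' : dot (x - q') (b - a) = 0) : q = q' := by
  obtain ⟨t, rfl⟩ := hq
  obtain ⟨s, rfl⟩ := hq'
  have hd : (b - a) ≠ 0 := sub_ne_zero.mpr (Ne.symm hab)
  have hd2 : (b.1 - a.1)^2 + (b.2 - a.2)^2 ≠ 0 := by
    intro h
    apply hd
    have h1 : b.1 - a.1 = 0 ∧ b.2 - a.2 = 0 := by
      constructor <;> nlinarith [sq_nonneg (b.1 - a.1), sq_nonneg (b.2 - a.2)]
    have : b - a = (b.1 - a.1, b.2 - a.2) := rfl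
    rw [this, h1.1, h1.2]; rfl
  have hts : t = s := by
    simp only [dot, Prod.fst_add, Prod.snd_add, Prod.fst_sub, Prod.snd_sub,
      Prod.smul_fst, Prod.smul_snd, smul_eq_mul] at hp hp'
    have key : (s - t) * ((b.1 - a.1)^2 + (b.2 - a.2)^2) = 0 := by
      linear_combination hp - hp'
    rcases mul_eq_zero.mp key with h | h
    · linarith
    · exact absurd h hd2
  rw [hts]

/-- Let N = 2m and P₁,…,P_N centrally symmetric (P_{i+m} = −Pᵢ), and f₂ = −f₁.
If Q₁ᵢ (resp. Q₂ᵢ) is the orthogonal projection of f₁ (resp. f₂) onto the line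
through the distinct points Pᵢ, Pᵢ₊₁, then Q₂,ᵢ₊ₘ = −Q₁,ᵢ for all i, and the
two pedal polygons have equal signed areas. -/
theorem stmt7 (m : ℕ) (hm : 0 < m) (P : ℕ → ℝ × ℝ)
    (hsym : ∀ i, P (i + m) = -P i)
    (hdist : ∀ i, P i ≠ P (i + 1))
    (f₁ f₂ : ℝ × ℝ) (hf : f₂ = -f₁)
    (Q₁ Q₂ : ℕ → ℝ × ℝ)
    (hQ₁line : ∀ i, ∃ t : ℝ, Q₁ i = P i + t • (P (i + 1) - P i))
    (hQ₁perp : ∀ i, dot (f₁ - Q₁ i) (P (i + 1) - P i) = 0)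
    (hQ₂line : ∀ i, ∃ t : ℝ, Q₂ i = P i + t • (P (i + 1) - P i))
    (hQ₂perp : ∀ i, dot (f₂ - Q₂ i) (P (i + 1) - P i) = 0) :
    (∀ i, Q₂ (i + m) = -Q₁ i) ∧
      signedArea (2 * m) Q₁ = signedArea (2 * m) Q₂ := by
  -- period of P
  have hPper : ∀ i, P (i + 2 * m) = P i := by
    intro i
    have := hsym (i + m)
    rw [hsym i] at this
    rw [show i + 2 * m = i + m + m by ring, this, neg_neg]
  -- the key anti-symmetry
  have hkey : ∀ i, Q₂ (i + m) = -Q₁ i := by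
    intro i
    have hseg : P (i + m) ≠ P (i + m + 1) := hdist (i + m)
    have hP1 : P (i + m) = -P i := hsym i
    have hP2 : P (i + m + 1) = -P (i + 1) := by
      rw [show i + m + 1 = i + 1 + m by ring, hsym (i + 1)]
    refine foot_unique hseg (hQ₂line (i + m)) ?_ (hQ₂perp (i + m)) ?_
    · obtain ⟨t, ht⟩ := hQ₁line i
      refine ⟨t, ?_⟩
      rw [hP1, hP2, ht]
      module
    · rw [hP1, hP2, hf]
      have := hQ₁perp i
      have heq : -f₁ - -Q₁ i = -(f₁ - Q₁ i) := by module
      have heq2 : -P (i + 1) - -P i = -(P (i + 1) - P i) := by module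
      rw [heq, heq2]
      simp only [dot, Prod.fst_neg, Prod.snd_neg] at this ⊢
      nlinarith [this]
  refine ⟨hkey, ?_⟩
  -- periodicity of Q₁ and Q₂
  have hQ₁per : ∀ i, Q₁ (i + 2 * m) = Q₁ i := by
    intro i
    have h1 : P (i + 2 * m) = P i := hPper i
    have h2 : P (i + 2 * m + 1) = P (i + 1) := by
      rw [show i + 2 * m + 1 = i + 1 + 2 * m by ring]; exact hPper (i + 1)
    refine foot_unique (hdist i) ?_ (hQ₁line i) ?_ (hQ₁perp i)
    · obtain ⟨t, ht⟩ := hQ₁line (i + 2 * m)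
      exact ⟨t, by rw [ht, h1, h2]⟩
    · have := hQ₁perp (i + 2 * m)
      rwa [h1, h2] at this
  have hQ₂per : ∀ i, Q₂ (i + 2 * m) = Q₂ i := by
    intro i
    have h1 : P (i + 2 * m) = P i := hPper i
    have h2 : P (i + 2 * m + 1) = P (i + 1) := by
      rw [show i + 2 * m + 1 = i + 1 + 2 * m by ring]; exact hPper (i + 1)
    refine foot_unique (hdist i) ?_ (hQ₂line i) ?_ (hQ₂perp i)
    · obtain ⟨t, ht⟩ := hQ₂line (i + 2 * m)
      exact ⟨t, by rw [ht, h1, h2]⟩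
    · have := hQ₂perp (i + 2 * m)
      rwa [h1, h2] at this
  -- Q₂ i = -Q₁ (i + m)
  have hQ₂eq : ∀ i, Q₂ i = -Q₁ (i + m) := by
    intro i
    have := hkey (i + m)
    rw [show i + m + m = i + 2 * m by ring, hQ₂per i] at this
    exact this
  have hper1 : Function.Periodic Q₁ (2 * m) := hQ₁per
  have hmod : ∀ k, Q₁ (k % (2 * m)) = Q₁ k := fun k => hper1.map_mod_nat k
  set n := 2 * m with hn
  have hnpos : 0 < n := by omega
  -- define the periodic summand
  set A : ℕ → ℝ := fun i => cross (Q₁ (i % n)) (Q₁ ((i + 1) % n)) with hA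
  have hAper : ∀ i, A (i + n) = A i := by
    intro i
    simp only [hA, Nat.add_mod_right, show i + n + 1 = i + 1 + n by ring]
  have hcrossneg : ∀ p q : ℝ × ℝ, cross (-p) (-q) = cross p q := by
    intro p q
    simp [cross]
  have h1 : signedArea n Q₁ = (1 / 2) * ∑ i ∈ Finset.range n, A i := by
    unfold signedArea
    congr 1
    apply Finset.sum_congr rfl
    intro i hi
    simp only [Finset.mem_range] at hi
    simp only [hA, Nat.mod_eq_of_lt hi]
  have h2 : signedArea n Q₂ = (1 / 2) * ∑ i ∈ Finset.range n, A (i + m) := by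
    unfold signedArea
    congr 1
    apply Finset.sum_congr rfl
    intro i hi
    simp only [Finset.mem_range] at hi
    rw [hQ₂eq i, hQ₂eq ((i + 1) % n), hcrossneg]
    simp only [hA]
    congr 1
    · exact (hmod (i + m)).symm
    · rw [← hmod ((i + 1) % n + m)]
      congr 1
      have h : ((i + 1) % n + m) % n = (i + 1 + m) % n :=
        (Nat.mod_modEq (i + 1) n).add_right m
      rw [h]
      congr 1
      ring
  rw [h1, h2, sum_shift A hAper m]
end

section
/- Let a > b > 0 and 0 < a'' < a with confocal condition a''² − b''² = a² − b², b'' = √(a''² − (a²−b²)) (assuming a''² > a² − b²). Suppose a line ℓ is tangent to the caustic ellipse x²/a''² + y²/b''² = 1 at a point and meets the billiard ellipse x²/a² + y²/b² = 1 at a point P, with unit direction v along ℓ. Then ⟨𝒜P, v⟩² = (a² − a''²)/(a²b²), where 𝒜 = diag(1/a², 1/b²). Hence the Joachimsthal constant satisfies |J| = √(a² − a''²)/(ab). -/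
/-- The linear map 𝒜 = diag(1/a², 1/b²) applied to a point. -/
noncomputable def amap (a b : ℝ) (p : ℝ × ℝ) : ℝ × ℝ := (p.1 / a ^ 2, p.2 / b ^ 2)

/-- Stachel's formula for Joachimsthal's constant: if a line with unit
direction v is tangent at T to the confocal caustic x²/a''² + y²/b''² = 1
(b'' = √(a''² − (a²−b²))) and meets the billiard ellipse x²/a² + y²/b² = 1
at P, then ⟨𝒜P, v⟩² = (a² − a''²)/(a²b²); hence |J| = √(a² − a''²)/(ab). -/
theorem stmt13 (a b a'' b'' : ℝ) (hab : a > b) (hb : b > 0)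
    (ha'' : 0 < a'') (ha''a : a'' < a)
    (hcau : a'' ^ 2 > a ^ 2 - b ^ 2)
    (hb'' : b'' = Real.sqrt (a'' ^ 2 - (a ^ 2 - b ^ 2)))
    (T P v : ℝ × ℝ)
    (hT : T.1 ^ 2 / a'' ^ 2 + T.2 ^ 2 / b'' ^ 2 = 1)
    (hvtan : v.1 * T.1 / a'' ^ 2 + v.2 * T.2 / b'' ^ 2 = 0)
    (hPline : P.1 * T.1 / a'' ^ 2 + P.2 * T.2 / b'' ^ 2 = 1)
    (hP : P.1 ^ 2 / a ^ 2 + P.2 ^ 2 / b ^ 2 = 1)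
    (hunit : v.1 ^ 2 + v.2 ^ 2 = 1) :
    dot (amap a b P) v ^ 2 = (a ^ 2 - a'' ^ 2) / (a ^ 2 * b ^ 2) ∧
      |dot (amap a b P) v| = Real.sqrt (a ^ 2 - a'' ^ 2) / (a * b) := by
  have ha : 0 < a := hb.trans hab
  have ha0 : a ≠ 0 := ne_of_gt ha
  have hb0 : b ≠ 0 := ne_of_gt hb
  have hC : a'' ^ 2 ≠ 0 := pow_ne_zero _ (ne_of_gt ha'')
  have hbbsq : b'' ^ 2 = a'' ^ 2 - (a ^ 2 - b ^ 2) := by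
    rw [hb'']; exact Real.sq_sqrt (by linarith)
  have hb''pos : 0 < b'' := by
    rw [hb'']; exact Real.sqrt_pos.mpr (by linarith)
  have hD : b'' ^ 2 ≠ 0 := pow_ne_zero _ (ne_of_gt hb''pos)
  -- cleared hypotheses
  have hT' : T.1 ^ 2 * b'' ^ 2 + T.2 ^ 2 * a'' ^ 2 = a'' ^ 2 * b'' ^ 2 := by
    field_simp at hT; linear_combination hT
  have hv' : v.1 * T.1 * b'' ^ 2 + v.2 * T.2 * a'' ^ 2 = 0 := by
    field_simp at hvtan; linear_combination hvtan
  have hPl' : P.1 * T.1 * b'' ^ 2 + P.2 * T.2 * a'' ^ 2 = a'' ^ 2 * b'' ^ 2 := by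
    field_simp at hPline; linear_combination hPline
  have hPc : P.1 ^ 2 * b ^ 2 + P.2 ^ 2 * a ^ 2 = a ^ 2 * b ^ 2 := by
    field_simp at hP; linear_combination hP
  -- the direction of the line is v : P - T is proportional to v
  have hcross : (P.1 - T.1) * v.2 - (P.2 - T.2) * v.1 = 0 := by
    by_cases hX : T.1 * b'' ^ 2 ≠ 0
    · have h0 : (T.1 * b'' ^ 2) * ((P.1 - T.1) * v.2 - (P.2 - T.2) * v.1) = 0 := by
        linear_combination v.2 * hPl' - v.2 * hT' - (P.2 - T.2) * hv'
      exact (mul_eq_zero.mp h0).resolve_left hX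
    · push_neg at hX
      have hY : T.2 * a'' ^ 2 ≠ 0 := by
        intro hY0
        have hT1 : T.1 = 0 := by
          rcases mul_eq_zero.mp hX with h | h; exact h; exact absurd h hD
        have hT2 : T.2 = 0 := by
          rcases mul_eq_zero.mp hY0 with h | h; exact h; exact absurd h hC
        rw [hT1, hT2] at hT'
        simp at hT'
        rcases hT' with h | h
        · exact (ne_of_gt ha'') h
        · exact (ne_of_gt hb''pos) h
      have h0 : (T.2 * a'' ^ 2) * ((P.1 - T.1) * v.2 - (P.2 - T.2) * v.1) = 0 := by
        linear_combination -(v.1 * hPl') + v.1 * hT' + (P.1 - T.1) * hv'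
      exact (mul_eq_zero.mp h0).resolve_left hY
  set t : ℝ := (P.1 - T.1) * v.1 + (P.2 - T.2) * v.2 with ht
  have hP1 : P.1 = T.1 + t * v.1 := by
    rw [ht]; linear_combination (-(P.1 - T.1)) * hunit + v.2 * hcross
  have hP2 : P.2 = T.2 + t * v.2 := by
    rw [ht]; linear_combination (-(P.2 - T.2)) * hunit - v.1 * hcross
  set w : ℝ := v.1 * T.1 / a'' ^ 2 with hw
  have h1 : v.1 * T.1 = w * a'' ^ 2 := by
    rw [hw]; field_simp
  have h2 : v.2 * T.2 = -(w * b'' ^ 2) := by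
    have h2' : a'' ^ 2 * (v.2 * T.2 + w * b'' ^ 2) = 0 := by
      linear_combination hv' - b'' ^ 2 * h1
    have := (mul_eq_zero.mp h2').resolve_left hC
    linarith
  have hL : T.1 * v.1 * b ^ 2 + T.2 * v.2 * a ^ 2
      = w * (a ^ 2 - b ^ 2) * (a ^ 2 - a'' ^ 2) := by
    linear_combination b ^ 2 * h1 + a ^ 2 * h2 - w * a ^ 2 * hbbsq
  have hS2 : (a ^ 2 * b ^ 2 - (T.1 ^ 2 * b ^ 2 + T.2 ^ 2 * a ^ 2)) * (a'' ^ 2 * b'' ^ 2)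
      = (a ^ 2 - a'' ^ 2) * (T.1 ^ 2 * b ^ 2 * b'' ^ 2 + T.2 ^ 2 * a ^ 2 * a'' ^ 2) := by
    linear_combination (-(a ^ 2 * b ^ 2)) * hT' - T.2 ^ 2 * a ^ 2 * a'' ^ 2 * hbbsq
  have hS3 : v.1 ^ 2 * T.2 ^ 2 * a'' ^ 2 + v.2 ^ 2 * T.1 ^ 2 * b'' ^ 2
      = a'' ^ 2 * b'' ^ 2 - w ^ 2 * a'' ^ 2 * b'' ^ 2 * (a'' ^ 2 + b'' ^ 2) := by
    linear_combination a'' ^ 2 * b'' ^ 2 * hunit + (v.1 ^ 2 + v.2 ^ 2) * hT'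
      - b'' ^ 2 * (v.1 * T.1 + w * a'' ^ 2) * h1
      - a'' ^ 2 * (v.2 * T.2 - w * b'' ^ 2) * h2
  have hMS : (v.1 ^ 2 * b ^ 2 + v.2 ^ 2 * a ^ 2)
        * (T.1 ^ 2 * b ^ 2 * b'' ^ 2 + T.2 ^ 2 * a ^ 2 * a'' ^ 2)
      = a'' ^ 2 * b'' ^ 2
        * (a ^ 2 * b ^ 2 - w ^ 2 * (a ^ 2 - b ^ 2) ^ 2 * (a ^ 2 - a'' ^ 2)) := by
    linear_combination a ^ 2 * b ^ 2 * hS3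
      + b ^ 4 * b'' ^ 2 * (v.1 * T.1 + w * a'' ^ 2) * h1
      + a ^ 4 * a'' ^ 2 * (v.2 * T.2 - w * b'' ^ 2) * h2
      + w ^ 2 * a'' ^ 2 * b'' ^ 2 * (a ^ 2 - b ^ 2) * a ^ 2 * hbbsq
  have hkey0 : a'' ^ 2 * b'' ^ 2 *
      ((T.1 * v.1 * b ^ 2 + T.2 * v.2 * a ^ 2) ^ 2
        + (v.1 ^ 2 * b ^ 2 + v.2 ^ 2 * a ^ 2)
            * (a ^ 2 * b ^ 2 - (T.1 ^ 2 * b ^ 2 + T.2 ^ 2 * a ^ 2))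
        - (a ^ 2 - a'' ^ 2) * (a ^ 2 * b ^ 2)) = 0 := by
    linear_combination
      a'' ^ 2 * b'' ^ 2 * (T.1 * v.1 * b ^ 2 + T.2 * v.2 * a ^ 2
        + w * (a ^ 2 - b ^ 2) * (a ^ 2 - a'' ^ 2)) * hL
      + (v.1 ^ 2 * b ^ 2 + v.2 ^ 2 * a ^ 2) * hS2
      + (a ^ 2 - a'' ^ 2) * hMS
  have hkey : (T.1 * v.1 * b ^ 2 + T.2 * v.2 * a ^ 2) ^ 2
      + (v.1 ^ 2 * b ^ 2 + v.2 ^ 2 * a ^ 2)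
          * (a ^ 2 * b ^ 2 - (T.1 ^ 2 * b ^ 2 + T.2 ^ 2 * a ^ 2))
      - (a ^ 2 - a'' ^ 2) * (a ^ 2 * b ^ 2) = 0 := by
    have hCD : a'' ^ 2 * b'' ^ 2 ≠ 0 := mul_ne_zero hC hD
    exact (mul_eq_zero.mp hkey0).resolve_left hCD
  have hP4 : T.1 ^ 2 * b ^ 2 + T.2 ^ 2 * a ^ 2
      + 2 * t * (T.1 * v.1 * b ^ 2 + T.2 * v.2 * a ^ 2)
      + t ^ 2 * (v.1 ^ 2 * b ^ 2 + v.2 ^ 2 * a ^ 2) = a ^ 2 * b ^ 2 := by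
    rw [hP1, hP2] at hPc; linear_combination hPc
  have hJ : ((T.1 * v.1 * b ^ 2 + T.2 * v.2 * a ^ 2)
      + t * (v.1 ^ 2 * b ^ 2 + v.2 ^ 2 * a ^ 2)) ^ 2
      = (a ^ 2 - a'' ^ 2) * (a ^ 2 * b ^ 2) := by
    linear_combination hkey + (v.1 ^ 2 * b ^ 2 + v.2 ^ 2 * a ^ 2) * hP4
  have hdot : dot (amap a b P) v
      = ((T.1 * v.1 * b ^ 2 + T.2 * v.2 * a ^ 2)
        + t * (v.1 ^ 2 * b ^ 2 + v.2 ^ 2 * a ^ 2)) / (a ^ 2 * b ^ 2) := by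
    simp only [dot, amap]
    rw [hP1, hP2]
    field_simp
    ring
  have part1 : dot (amap a b P) v ^ 2 = (a ^ 2 - a'' ^ 2) / (a ^ 2 * b ^ 2) := by
    rw [hdot, div_pow, hJ, show ((a ^ 2 * b ^ 2) ^ 2 : ℝ)
      = (a ^ 2 * b ^ 2) * (a ^ 2 * b ^ 2) from sq _]
    exact mul_div_mul_right _ _ (by positivity)
  refine ⟨part1, ?_⟩
  have hδ : 0 ≤ a ^ 2 - a'' ^ 2 := by
    have := pow_le_pow_left₀ ha''.le ha''a.le 2
    linarith
  calc |dot (amap a b P) v| = Real.sqrt (dot (amap a b P) v ^ 2) :=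
        (Real.sqrt_sq_eq_abs _).symm
    _ = Real.sqrt ((a ^ 2 - a'' ^ 2) / (a ^ 2 * b ^ 2)) := by rw [part1]
    _ = Real.sqrt (a ^ 2 - a'' ^ 2) / Real.sqrt (a ^ 2 * b ^ 2) :=
        Real.sqrt_div hδ _
    _ = Real.sqrt (a ^ 2 - a'' ^ 2) / (a * b) := by
        rw [show a ^ 2 * b ^ 2 = (a * b) ^ 2 by ring, Real.sqrt_sq (by positivity)]
end
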